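/- Let T ⊆ ℝ^d be a cube tiling of ℝ^d, fix a, b ∈ ℝ and i ∈ {1,...,d}, and define T' = {t ∈ T : t_i ≢ a (mod 1)} ∪ {t + b·e_i : t ∈ T, t_i ≡ a (mod 1)}. Then T' is a cube tiling of ℝ^d. -/

import Mathlib

/-- The half-open unit cube `[x_1, x_1+1) × ⋯ × [x_d, x_d+1)` with corner `x`. -/
def cube (d : ℕ) (x : Fin d → ℝ) : Set (Fin d → ℝ) :=
  {y | ∀ i, x i ≤ y i ∧ y i < x i + 1}

/-- `T` is a cube tiling of `ℝ^d`: the cubes with corners in `T` are pairwise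
disjoint and their union is all of `ℝ^d`. -/
def IsTiling (d : ℕ) (T : Set (Fin d → ℝ)) : Prop :=
  (T.Pairwise fun t t' => Disjoint (cube d t) (cube d t')) ∧
  (⋃ t ∈ T, cube d t) = Set.univ

/-- The `i`-th standard basis vector of `ℝ^d`. -/
def stdBasis (d : ℕ) (i : Fin d) : Fin d → ℝ := fun j => if j = i then 1 else 0

/-- Two cubes (given by their corners `x`, `y`) faceshare if `y = x ± e_i`
for some standard basis vector `e_i`. -/
def Faceshare (d : ℕ) (x y : Fin d → ℝ) : Prop :=
  ∃ i : Fin d, y = x + stdBasis d i ∨ y = x - stdBasis d i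

/-- A tiling is faceshare-free if no two distinct cubes of it faceshare. -/
def FaceshareFree (d : ℕ) (T : Set (Fin d → ℝ)) : Prop :=
  ∀ t ∈ T, ∀ t' ∈ T, t ≠ t' → ¬ Faceshare d t t'

/-- A tiling `T` is periodic if `t + 2z ∈ T` for every `t ∈ T` and `z ∈ ℤ^d`. -/
def PeriodicTiling (d : ℕ) (T : Set (Fin d → ℝ)) : Prop :=
  ∀ t ∈ T, ∀ z : Fin d → ℤ, (fun j => t j + 2 * (z j : ℝ)) ∈ T

/-- A tiling is `s`-discrete if for each coordinate `i`, the values `t i` modulo 1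
over `t ∈ T` take at most `s` distinct values. -/
def SDiscrete (d s : ℕ) (T : Set (Fin d → ℝ)) : Prop :=
  ∀ i : Fin d, ∃ S : Finset ℝ, S.card ≤ s ∧ ∀ t ∈ T, Int.fract (t i) ∈ S

/-!
The tiles meeting a line parallel to `e_i` cut it into unit intervals, so their `i`-th
coordinates are congruent modulo `1`. Hence a point `y` lies in a tile with `t_i ≡ a (mod 1)`
exactly when `y - b e_i` does: the tiles of this residue class cover a union of whole lines
parallel to `e_i`, and sliding all of them by `b e_i` leaves both disjointness and covering intact.
-/

open Set Function

lemma mem_cube_add_iff {d : ℕ} {t v y : Fin d → ℝ} : y ∈ cube d (t + v) ↔ y - v ∈ cube d t := by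
  simp only [cube, mem_ofPred_eq, Pi.add_apply, Pi.sub_apply, le_sub_iff_add_le, sub_lt_iff_lt_add,
    add_right_comm _ (v _) 1]

lemma update_mem_cube_iff {d : ℕ} {u y : Fin d → ℝ} {i : Fin d} {r : ℝ} :
    update y i r ∈ cube d u ↔ r ∈ Ico (u i) (u i + 1) ∧ ∀ j ≠ i, u j ≤ y j ∧ y j < u j + 1 := by
  refine ⟨fun h => ⟨by simpa using h i, fun j hj => by simpa [hj] using h j⟩, fun ⟨hr, hy⟩ j => ?_⟩
  rcases eq_or_ne j i with rfl | hj
  · simpa using hr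
  · simpa [hj] using hy j hj

theorem exists_int_sub_eq_of_Ico_tiling {S : Set ℝ}
    (hdisj : ∀ s ∈ S, ∀ s' ∈ S, ∀ r ∈ Ico s (s + 1), r ∈ Ico s' (s' + 1) → s = s')
    (hcov : ∀ r, ∃ s ∈ S, r ∈ Ico s (s + 1)) {s s' : ℝ} (hs : s ∈ S) (hs' : s' ∈ S) :
    ∃ z : ℤ, s' - s = z := by
  have add_one_mem : ∀ s ∈ S, s + 1 ∈ S := by
    intro s hs
    obtain ⟨u, hu, hu₁, hu₂⟩ := hcov (s + 1)
    obtain rfl : u = s + 1 := by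
      by_contra hne
      have := hdisj s hs u hu u ⟨by linarith, lt_of_le_of_ne hu₁ hne⟩ ⟨le_rfl, by linarith⟩
      linarith
    exact hu
  have sub_one_mem : ∀ s ∈ S, s - 1 ∈ S := by
    intro s hs
    obtain ⟨u, hu, hu₁, hu₂⟩ := hcov (s - 1)
    obtain rfl : u + 1 = s :=
      hdisj _ (add_one_mem u hu) s hs s ⟨by linarith, by linarith⟩ ⟨le_rfl, by linarith⟩
    simpa using hu
  have add_int_mem : ∀ z : ℤ, s + z ∈ S := by
    intro z
    induction z using Int.induction_on with
    | zero => simpa using hs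
    | succ n ih => simpa [add_assoc] using add_one_mem _ ih
    | pred n ih => simpa [sub_eq_add_neg, add_assoc] using sub_one_mem _ ih
  -- `s + ⌊s' - s⌋ ∈ S` and `s'` start tiles that both contain `s'`.
  refine ⟨⌊s' - s⌋, ?_⟩
  have := hdisj _ (add_int_mem ⌊s' - s⌋) s' hs' s'
    ⟨by linarith [Int.floor_le (s' - s)], by linarith [Int.lt_floor_add_one (s' - s)]⟩
    ⟨le_rfl, by linarith⟩
  linarith

namespace IsTiling

variable {d : ℕ} {T : Set (Fin d → ℝ)}

theorem exists_mem_cube (hT : IsTiling d T) (y : Fin d → ℝ) : ∃ t ∈ T, y ∈ cube d t := by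
  simpa only [mem_iUnion₂, exists_prop] using hT.2.ge (mem_univ y)

/-- The `i`-th coordinates of the tiles met by the line through `x` parallel to `e_i` are the
left endpoints of a tiling of that line by unit intervals. -/
theorem exists_int_sub_eq_of_mem_cube (hT : IsTiling d T) (i : Fin d) {t t' x x' : Fin d → ℝ}
    (ht : t ∈ T) (ht' : t' ∈ T) (hx : x ∈ cube d t) (hx' : x' ∈ cube d t')
    (hxx' : ∀ j ≠ i, x' j = x j) :
    ∃ z : ℤ, t' i - t i = z := by
  let S : Set ℝ := {s | ∃ u ∈ T, ∃ r, update x i r ∈ cube d u ∧ u i = s}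
  refine exists_int_sub_eq_of_Ico_tiling (S := S) ?_ ?_ ⟨t, ht, x i, by simpa, rfl⟩
    ⟨t', ht', x' i, ?_, rfl⟩
  · rintro _ ⟨u, hu, r, hr, rfl⟩ _ ⟨u', hu', r', hr', rfl⟩ p hp hp'
    by_contra hne
    exact Set.disjoint_left.mp (hT.1 hu hu' fun h => hne (h ▸ rfl))
      (update_mem_cube_iff.2 ⟨hp, (update_mem_cube_iff.1 hr).2⟩)
      (update_mem_cube_iff.2 ⟨hp', (update_mem_cube_iff.1 hr').2⟩)
  · intro r
    obtain ⟨u, hu, hxu⟩ := hT.exists_mem_cube (update x i r)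
    exact ⟨u i, ⟨u, hu, r, hxu, rfl⟩, (update_mem_cube_iff.1 hxu).1⟩
  · convert hx' using 1
    ext j
    rcases eq_or_ne j i with rfl | hj
    · simp
    · simp [hj, hxx' j hj]

end IsTiling

lemma sub_smul_stdBasis_apply_of_ne {d : ℕ} (y : Fin d → ℝ) (b : ℝ) {i j : Fin d} (hj : j ≠ i) :
    (y - b • stdBasis d i) j = y j := by
  simp [stdBasis, hj]

def replacement (d : ℕ) (T : Set (Fin d → ℝ)) (a b : ℝ) (i : Fin d) : Set (Fin d → ℝ) :=
  {t | t ∈ T ∧ ¬ ∃ z : ℤ, t i - a = (z : ℝ)} ∪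
  {t' | ∃ t, t ∈ T ∧ (∃ z : ℤ, t i - a = (z : ℝ)) ∧ t' = t + b • stdBasis d i}

namespace IsTiling

variable {d : ℕ} {T : Set (Fin d → ℝ)}

theorem pairwise_disjoint_replacement (hT : IsTiling d T) (a b : ℝ) (i : Fin d) :
    (replacement d T a b i).Pairwise fun t t' => Disjoint (cube d t) (cube d t') := by
  have : Std.Symm fun t t' : Fin d → ℝ => Disjoint (cube d t) (cube d t') := ⟨fun _ _ h => h.symm⟩
  refine pairwise_union_of_symm.2 ⟨?_, ?_, ?_⟩
  · exact hT.1.mono fun t ht => ht.1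
  · rintro _ ⟨s, hs, -, rfl⟩ _ ⟨s', hs', -, rfl⟩ hne
    refine Set.disjoint_left.2 fun y hy hy' => ?_
    rw [mem_cube_add_iff] at hy hy'
    exact Set.disjoint_left.1 (hT.1 hs hs' fun h => hne (h ▸ rfl)) hy hy'
  · rintro u ⟨hu, hua⟩ _ ⟨s, hs, ⟨z, hz⟩, rfl⟩ -
    refine Set.disjoint_left.2 fun y hy hy' => hua ?_
    rw [mem_cube_add_iff] at hy'
    obtain ⟨z', hz'⟩ := hT.exists_int_sub_eq_of_mem_cube i hs hu hy' hy
      fun j hj => (sub_smul_stdBasis_apply_of_ne y b hj).symm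
    exact ⟨z' + z, by push_cast; linarith⟩

theorem iUnion_replacement (hT : IsTiling d T) (a b : ℝ) (i : Fin d) :
    ⋃ t ∈ replacement d T a b i, cube d t = univ := by
  refine eq_univ_of_forall fun y => ?_
  obtain ⟨t, ht, hyt⟩ := hT.exists_mem_cube y
  by_cases hta : ∃ z : ℤ, t i - a = z
  · obtain ⟨z, hz⟩ := hta
    obtain ⟨s, hs, hys⟩ := hT.exists_mem_cube (y - b • stdBasis d i)
    obtain ⟨z', hz'⟩ := hT.exists_int_sub_eq_of_mem_cube i ht hs hyt hys
      fun j hj => sub_smul_stdBasis_apply_of_ne y b hj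
    refine mem_biUnion (Or.inr ⟨s, hs, ⟨z' + z, by push_cast; linarith⟩, rfl⟩) ?_
    rwa [mem_cube_add_iff]
  · exact mem_biUnion (Or.inl ⟨ht, hta⟩) hyt

end IsTiling

/-- Replacement lemma (tiling part): shifting by `b` in coordinate `i` all corners
whose `i`-th coordinate is `≡ a (mod 1)` again yields a cube tiling. -/
theorem replacement_tiling (d : ℕ) (T : Set (Fin d → ℝ)) (hT : IsTiling d T)
    (a b : ℝ) (i : Fin d) :
    IsTiling d
      ({t | t ∈ T ∧ ¬ ∃ z : ℤ, t i - a = (z : ℝ)} ∪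
       {t' | ∃ t, t ∈ T ∧ (∃ z : ℤ, t i - a = (z : ℝ)) ∧ t' = t + b • stdBasis d i}) :=
  ⟨hT.pairwise_disjoint_replacement a b i, hT.iUnion_replacement a b i⟩
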